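/- Let u : [t₀,T] → L¹ and U : [t₀,T] → L¹ both be Lipschitz continuous with constant L₀, with u(t₀) = U(t₀), and suppose liminf_{h→0+} (1/h)‖u(τ+h) − S_h u(τ)‖ = 0 for a.e. τ ∈ K, where K ⊆ [t₀,T] is measurable with meas([t₀,T] \ K) ≤ ε₀, U(t) = S_{t−t₀}u(t₀), and (S_t) is a contractive semigroup whose trajectories from u(τ) are also L₀-Lipschitz. Then ‖u(t) − S_{t−t₀}u(t₀)‖ ≤ 2L₀ε₀ for all t ∈ [t₀,T]. -/

import Mathlib

open MeasureTheory Filter Set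
open scoped Topology

private lemma fence {f B : ℝ → ℝ} {a b : ℝ} (hf : ContinuousOn f (Icc a b))
    (hB : ContinuousOn B (Icc a b)) (ha : f a ≤ B a)
    (key : ∀ x ∈ Ico a b, ∃ᶠ z in 𝓝[>] x, f z - f x < B z - B x) :
    ∀ x ∈ Icc a b, f x ≤ B x := by
  have A : ContinuousOn (fun x => (f x, B x)) (Icc a b) := hf.prodMk hB
  have hs : IsClosed ({x | f x ≤ B x} ∩ Icc a b) := by
    rw [inter_comm]
    exact A.preimage_isClosed_of_isClosed isClosed_Icc OrderClosedTopology.isClosed_le'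
  intro x hx
  refine hs.Icc_subset_of_forall_exists_gt ha ?_ hx
  rintro y ⟨hyB : f y ≤ B y, hy⟩ w hw
  rcases hyB.lt_or_eq with hyB | hyB
  · refine nonempty_of_mem (inter_mem ?_ (Ioc_mem_nhdsGT_of_mem ⟨le_rfl, hw⟩))
    have h1 : ∀ᶠ z in 𝓝[Icc a b] y, f z < B z :=
      A y (Ico_subset_Icc_self hy)
        (IsOpen.mem_nhds (isOpen_lt continuous_fst continuous_snd) hyB)
    have h2 : ∀ᶠ z in 𝓝[>] y, f z < B z :=
      nhdsWithin_le_of_mem (Icc_mem_nhdsGT_of_mem hy) h1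
    exact h2.mono fun z hz => hz.le
  · obtain ⟨z, hz1, hz2⟩ := ((key y hy).and_eventually
      (Ioc_mem_nhdsGT_of_mem ⟨le_rfl, hw⟩)).exists
    exact ⟨z, show f z ≤ B z by linarith, hz2⟩

/-- Combining the error estimate with the pointwise bounds: the deviation of `u` from the
semigroup trajectory is at most `2 L₀ ε₀`. -/
theorem stmt_9 {E : Type*} [NormedAddCommGroup E] [NormedSpace ℝ E]
    (S : ℝ → E → E)
    (hS0 : ∀ x, S 0 x = x)
    (hSadd : ∀ s t : ℝ, 0 ≤ s → 0 ≤ t → ∀ x, S (s + t) x = S s (S t x))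
    (hcontr : ∀ t : ℝ, 0 ≤ t → ∀ x y, ‖S t x - S t y‖ ≤ ‖x - y‖)
    (t₀ T L₀ ε₀ : ℝ) (ht : t₀ ≤ T) (hL₀ : 0 ≤ L₀) (hε₀ : 0 ≤ ε₀)
    (u U : ℝ → E)
    (huLip : ∀ t₁ ∈ Set.Icc t₀ T, ∀ t₂ ∈ Set.Icc t₀ T, ‖u t₁ - u t₂‖ ≤ L₀ * |t₁ - t₂|)
    (hULip : ∀ t₁ ∈ Set.Icc t₀ T, ∀ t₂ ∈ Set.Icc t₀ T, ‖U t₁ - U t₂‖ ≤ L₀ * |t₁ - t₂|)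
    (hU : ∀ t ∈ Set.Icc t₀ T, U t = S (t - t₀) (u t₀))
    (hu0 : u t₀ = U t₀)
    (hSLip : ∀ τ ∈ Set.Icc t₀ T, ∀ h₁ h₂ : ℝ, 0 ≤ h₁ → 0 ≤ h₂ →
      ‖S h₁ (u τ) - S h₂ (u τ)‖ ≤ L₀ * |h₁ - h₂|)
    (K : Set ℝ) (hKm : MeasurableSet K) (hKsub : K ⊆ Set.Icc t₀ T)
    (hKmeas : (volume (Set.Icc t₀ T \ K)).toReal ≤ ε₀)
    (hliminf : ∀ᵐ τ ∂(volume : Measure ℝ), τ ∈ K →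
      liminf (fun h : ℝ => ‖u (τ + h) - S h (u τ)‖ / h) (nhdsWithin 0 (Set.Ioi 0)) = 0) :
    ∀ t ∈ Set.Icc t₀ T, ‖u t - S (t - t₀) (u t₀)‖ ≤ 2 * L₀ * ε₀ := by
  intro t htmem
  set f : ℝ → ℝ := fun s => ‖u s - S (s - t₀) (u t₀)‖ with hf_def
  -- Lipschitz bound for f on [t₀, T]
  have hfLip : ∀ x ∈ Icc t₀ T, ∀ z ∈ Icc t₀ T, |f x - f z| ≤ 2 * L₀ * |x - z| := by
    intro x hx z hz
    have h1 : |f x - f z| ≤ ‖(u x - S (x - t₀) (u t₀)) - (u z - S (z - t₀) (u t₀))‖ :=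
      abs_norm_sub_norm_le _ _
    have h2 : (u x - S (x - t₀) (u t₀)) - (u z - S (z - t₀) (u t₀))
        = (u x - u z) + (S (z - t₀) (u t₀) - S (x - t₀) (u t₀)) := by abel
    have h3 : ‖S (z - t₀) (u t₀) - S (x - t₀) (u t₀)‖ ≤ L₀ * |(z - t₀) - (x - t₀)| :=
      hSLip t₀ ⟨le_rfl, ht⟩ _ _ (by linarith [hz.1]) (by linarith [hx.1])
    have h4 : ‖u x - u z‖ ≤ L₀ * |x - z| := huLip x hx z hz
    calc |f x - f z| ≤ ‖(u x - u z) + (S (z - t₀) (u t₀) - S (x - t₀) (u t₀))‖ := by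
          rw [← h2]; exact h1
      _ ≤ ‖u x - u z‖ + ‖S (z - t₀) (u t₀) - S (x - t₀) (u t₀)‖ := norm_add_le _ _
      _ ≤ L₀ * |x - z| + L₀ * |(z - t₀) - (x - t₀)| := add_le_add h4 h3
      _ = 2 * L₀ * |x - z| := by rw [show (z - t₀) - (x - t₀) = -(x - z) by ring, abs_neg]; ring
  have hfcont : ContinuousOn f (Icc t₀ T) := by
    apply LipschitzOnWith.continuousOn (K := (2 * L₀).toNNReal)
    rw [lipschitzOnWith_iff_dist_le_mul]
    intro x hx z hz
    rw [Real.dist_eq, Real.dist_eq]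
    calc |f x - f z| ≤ 2 * L₀ * |x - z| := hfLip x hx z hz
      _ = (2 * L₀).toNNReal * |x - z| := by
          rw [Real.coe_toNNReal _ (by positivity)]
  have hft₀ : f t₀ = 0 := by simp [hf_def, hS0]
  -- key one-sided estimate: for τ ∈ [t₀,T], h > 0, f (τ+h) - f τ ≤ ‖u (τ+h) - S h (u τ)‖
  have hkey : ∀ τ, t₀ ≤ τ → ∀ h : ℝ, 0 < h →
      f (τ + h) - f τ ≤ ‖u (τ + h) - S h (u τ)‖ := by
    intro τ hτ h hh
    have hsem : S (τ + h - t₀) (u t₀) = S h (S (τ - t₀) (u t₀)) := by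
      rw [show τ + h - t₀ = h + (τ - t₀) by ring]
      exact hSadd h (τ - t₀) hh.le (by linarith) _
    have h1 : f (τ + h) ≤ ‖u (τ + h) - S h (u τ)‖ + ‖S h (u τ) - S h (S (τ - t₀) (u t₀))‖ := by
      calc f (τ + h) = ‖(u (τ + h) - S h (u τ)) + (S h (u τ) - S (τ + h - t₀) (u t₀))‖ := by
            simp [hf_def]
        _ ≤ ‖u (τ + h) - S h (u τ)‖ + ‖S h (u τ) - S (τ + h - t₀) (u t₀)‖ := norm_add_le _ _
        _ = _ := by rw [hsem]
    have h2 : ‖S h (u τ) - S h (S (τ - t₀) (u t₀))‖ ≤ f τ := hcontr h hh.le _ _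
    linarith
  -- reduce to: ∀ ε > 0, f t ≤ 2 L₀ ε₀ + ε
  refine le_of_forall_pos_le_add fun ε hε => ?_
  set c : ℝ := 2 * L₀ + (T - t₀) + 1 with hc_def
  have hc : 0 < c := by simp only [hc_def]; linarith
  set δ : ℝ := ε / c with hδ_def
  have hδ : 0 < δ := div_pos hε hc
  -- the bad set and its open neighborhood
  set P : ℝ → Prop := fun τ => τ ∈ K →
    liminf (fun h : ℝ => ‖u (τ + h) - S h (u τ)‖ / h) (𝓝[>] (0:ℝ)) = 0 with hP_def
  set A : Set ℝ := (Icc t₀ T \ K) ∪ {τ | ¬ P τ} with hA_def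
  have hNnull : volume {τ | ¬ P τ} = 0 := hliminf
  have hAvol : volume A ≤ volume (Icc t₀ T \ K) := by
    calc volume A ≤ volume (Icc t₀ T \ K) + volume {τ | ¬ P τ} := measure_union_le _ _
      _ = volume (Icc t₀ T \ K) := by rw [hNnull, add_zero]
  have hdiff_fin : volume (Icc t₀ T \ K) ≠ ⊤ :=
    ((measure_mono (diff_subset)).trans_lt (by simp [Real.volume_Icc])).ne
  have hAfin : volume A ≠ ⊤ := (hAvol.trans_lt (lt_top_iff_ne_top.2 hdiff_fin)).ne
  obtain ⟨O, hAO, hOopen, hOvol⟩ :=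
    Set.exists_isOpen_lt_add A hAfin (ε := ENNReal.ofReal δ) (ENNReal.ofReal_pos.2 hδ).ne'
  have hOfin : volume O ≠ ⊤ := by
    refine (hOvol.trans_le ?_).ne
    exact le_top
  have hOvol' : (volume O).toReal ≤ ε₀ + δ := by
    have h1 : volume A + ENNReal.ofReal δ ≤ ENNReal.ofReal ε₀ + ENNReal.ofReal δ := by
      gcongr
      calc volume A ≤ volume (Icc t₀ T \ K) := hAvol
        _ = ENNReal.ofReal ((volume (Icc t₀ T \ K)).toReal) := (ENNReal.ofReal_toReal hdiff_fin).symm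
        _ ≤ ENNReal.ofReal ε₀ := ENNReal.ofReal_le_ofReal hKmeas
    have h2 : volume O ≤ ENNReal.ofReal (ε₀ + δ) := by
      rw [ENNReal.ofReal_add hε₀ hδ.le]
      exact (hOvol.le.trans h1)
    calc (volume O).toReal ≤ (ENNReal.ofReal (ε₀ + δ)).toReal := ENNReal.toReal_mono ENNReal.ofReal_ne_top h2
      _ = ε₀ + δ := ENNReal.toReal_ofReal (by positivity)
  -- the comparison function
  set V : ℝ → ℝ := fun s => (volume (O ∩ Ioc t₀ s)).toReal with hV_def
  have hVfin : ∀ s : ℝ, volume (O ∩ Ioc t₀ s) ≠ ⊤ :=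
    fun s => ((measure_mono inter_subset_left).trans_lt (lt_top_iff_ne_top.2 hOfin)).ne
  have hVsplit : ∀ x z : ℝ, t₀ ≤ x → x ≤ z →
      V z = V x + (volume (O ∩ Ioc x z)).toReal := by
    intro x z h1 h2
    have hun : Ioc t₀ z = Ioc t₀ x ∪ Ioc x z := (Set.Ioc_union_Ioc_eq_Ioc h1 h2).symm
    have hdisj : Disjoint (O ∩ Ioc t₀ x) (O ∩ Ioc x z) :=
      (Set.Ioc_disjoint_Ioc_of_le le_rfl).mono inter_subset_right inter_subset_right
    have : volume (O ∩ Ioc t₀ z) = volume (O ∩ Ioc t₀ x) + volume (O ∩ Ioc x z) := by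
      rw [hun, inter_union_distrib_left]
      exact measure_union hdisj (hOopen.measurableSet.inter measurableSet_Ioc)
    simp only [hV_def]
    rw [this, ENNReal.toReal_add (hVfin x) ((measure_mono inter_subset_left).trans_lt
      (lt_top_iff_ne_top.2 hOfin)).ne]
  have hVmono : ∀ x z : ℝ, t₀ ≤ x → x ≤ z → V x ≤ V z := by
    intro x z h1 h2
    rw [hVsplit x z h1 h2]
    exact le_add_of_nonneg_right ENNReal.toReal_nonneg
  have hVlip : ∀ x z : ℝ, t₀ ≤ x → x ≤ z → V z - V x ≤ z - x := by
    intro x z h1 h2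
    rw [hVsplit x z h1 h2]
    have : volume (O ∩ Ioc x z) ≤ ENNReal.ofReal (z - x) := by
      calc volume (O ∩ Ioc x z) ≤ volume (Ioc x z) := measure_mono inter_subset_right
        _ = ENNReal.ofReal (z - x) := Real.volume_Ioc
    have := ENNReal.toReal_mono ENNReal.ofReal_ne_top this
    rw [ENNReal.toReal_ofReal (by linarith)] at this
    linarith
  have hVfull : ∀ x z : ℝ, t₀ ≤ x → x ≤ z → Ioc x z ⊆ O → V z - V x = z - x := by
    intro x z h1 h2 hsub
    rw [hVsplit x z h1 h2, inter_eq_self_of_subset_right hsub, Real.volume_Ioc,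
      ENNReal.toReal_ofReal (by linarith)]
    ring
  set B : ℝ → ℝ := fun s => 2 * L₀ * V s + δ * (s - t₀) with hB_def
  have hBcont : ContinuousOn B (Icc t₀ T) := by
    have hVc : ContinuousOn V (Icc t₀ T) := by
      apply LipschitzOnWith.continuousOn (K := 1)
      rw [lipschitzOnWith_iff_dist_le_mul]
      intro x hx z hz
      rw [Real.dist_eq, Real.dist_eq]
      rcases le_total x z with h | h
      · have h1 := hVmono x z hx.1 h
        have h2 := hVlip x z hx.1 h
        rw [abs_of_nonpos (by linarith), abs_of_nonpos (by linarith)]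
        push_cast; linarith
      · have h1 := hVmono z x hz.1 h
        have h2 := hVlip z x hz.1 h
        rw [abs_of_nonneg (by linarith), abs_of_nonneg (by linarith)]
        push_cast; linarith
    exact (continuousOn_const.mul hVc).add (continuousOn_const.mul
      (continuousOn_id.sub continuousOn_const))
  have hBt₀ : f t₀ ≤ B t₀ := by
    simp [hB_def, hft₀, hV_def]
  -- the key frequently estimate
  have hkey2 : ∀ x ∈ Ico t₀ T, ∃ᶠ z in 𝓝[>] x, f z - f x < B z - B x := by
    intro x hx
    by_cases hxO : x ∈ O
    · -- x in the open set: slope of B is 2L₀ + δ, slope of f at most 2L₀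
      obtain ⟨r, hr, hball⟩ := Metric.isOpen_iff.1 hOopen x hxO
      apply Filter.Eventually.frequently
      have hmem : Ioc x (min T (x + r / 2)) ∈ 𝓝[>] x :=
        Ioc_mem_nhdsGT_of_mem ⟨le_rfl, lt_min hx.2 (by linarith)⟩
      filter_upwards [hmem] with z hz
      have hzT : z ≤ T := hz.2.trans (min_le_left _ _)
      have hzr : z ≤ x + r / 2 := hz.2.trans (min_le_right _ _)
      have hxz : x < z := hz.1
      have hsub : Ioc x z ⊆ O := by
        intro y hy
        apply hball
        rw [Metric.mem_ball, Real.dist_eq, abs_of_nonneg (by linarith [hy.1.le])]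
        · linarith [hy.2]
      have hBz : B z - B x = 2 * L₀ * (z - x) + δ * (z - x) := by
        simp only [hB_def]
        have := hVfull x z hx.1 hxz.le hsub
        ring_nf
        nlinarith [this]
      have hfz : f z - f x ≤ 2 * L₀ * (z - x) := by
        have := hfLip z ⟨hx.1.trans hxz.le, hzT⟩ x ⟨hx.1, hx.2.le⟩
        calc f z - f x ≤ |f z - f x| := le_abs_self _
          _ ≤ 2 * L₀ * |z - x| := this
          _ = 2 * L₀ * (z - x) := by rw [abs_of_nonneg (by linarith)]
      have : 0 < δ * (z - x) := mul_pos hδ (by linarith)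
      linarith
    · -- x in K minus the null set: liminf of the quotient is 0
      have hxA : x ∉ A := fun h => hxO (hAO h)
      have hxK : x ∈ K := by
        by_contra hxK
        exact hxA (Or.inl ⟨Ico_subset_Icc_self hx, hxK⟩)
      have hxP : P x := by
        by_contra hxP
        exact hxA (Or.inr hxP)
      have hlim := hxP hxK
      have hbd : IsBoundedUnder (· ≤ ·) (𝓝[>] (0:ℝ))
          (fun h : ℝ => ‖u (x + h) - S h (u x)‖ / h) := by
        refine ⟨2 * L₀, Filter.eventually_map.2 ?_⟩
        filter_upwards [Ioo_mem_nhdsGT_of_mem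
          (⟨le_rfl, sub_pos.2 hx.2⟩ : (0:ℝ) ∈ Ico 0 (T - x))] with h hh
        have hh0 : 0 < h := hh.1
        have hxh : x + h ∈ Icc t₀ T := ⟨by linarith [hx.1], by linarith [hh.2]⟩
        have e1 : ‖u (x + h) - u x‖ ≤ L₀ * h := by
          have := huLip (x + h) hxh x (Ico_subset_Icc_self hx)
          rwa [show x + h - x = h by ring, abs_of_pos hh0] at this
        have e2 : ‖u x - S h (u x)‖ ≤ L₀ * h := by
          have := hSLip x (Ico_subset_Icc_self hx) 0 h le_rfl hh0.le
          rwa [hS0, zero_sub, abs_neg, abs_of_pos hh0] at this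
        rw [div_le_iff₀ hh0]
        calc ‖u (x + h) - S h (u x)‖
            ≤ ‖u (x + h) - u x‖ + ‖u x - S h (u x)‖ := norm_sub_le_norm_sub_add_norm_sub _ _ _
          _ ≤ L₀ * h + L₀ * h := add_le_add e1 e2
          _ = 2 * L₀ * h := by ring
      have hfreq : ∃ᶠ h in 𝓝[>] (0:ℝ), ‖u (x + h) - S h (u x)‖ / h < δ :=
        frequently_lt_of_liminf_lt hbd.isCoboundedUnder_ge (by rw [hlim]; exact hδ)
      have hfreq2 : ∃ᶠ h in 𝓝[>] (0:ℝ),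
          f (x + h) - f x < B (x + h) - B x := by
        refine (hfreq.and_eventually self_mem_nhdsWithin).mono ?_
        rintro h ⟨hlt, (hh : 0 < h)⟩
        have h1 : f (x + h) - f x ≤ ‖u (x + h) - S h (u x)‖ := hkey x hx.1 h hh
        have h2 : ‖u (x + h) - S h (u x)‖ < δ * h := by
          have := (div_lt_iff₀ hh).1 hlt
          linarith
        have h3 : δ * h ≤ B (x + h) - B x := by
          simp only [hB_def]
          have := hVmono x (x + h) hx.1 (by linarith)
          nlinarith
        linarith
      have htend : Tendsto (fun h : ℝ => x + h) (𝓝[>] (0:ℝ)) (𝓝[>] x) := by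
        refine tendsto_nhdsWithin_of_tendsto_nhds_of_eventually_within _ ?_ ?_
        · have : Tendsto (fun h : ℝ => x + h) (𝓝 (0:ℝ)) (𝓝 x) := by
            simpa using (continuous_const_add x).tendsto (0:ℝ)
          exact this.mono_left nhdsWithin_le_nhds
        · filter_upwards [self_mem_nhdsWithin] with h hh
          exact by simpa using hh
      exact htend.frequently hfreq2
  -- apply the fencing lemma
  have hfB := fence hfcont hBcont hBt₀ hkey2 t htmem
  have hVt : V t ≤ ε₀ + δ := by
    calc V t ≤ (volume O).toReal :=
          ENNReal.toReal_mono hOfin (measure_mono inter_subset_left)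
      _ ≤ ε₀ + δ := hOvol'
  have hBt : B t ≤ 2 * L₀ * ε₀ + δ * c := by
    simp only [hB_def, hc_def]
    nlinarith [htmem.1, htmem.2, hδ.le]
  have hδc : δ * c = ε := by
    rw [hδ_def, div_mul_cancel₀ _ hc.ne']
  linarith
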